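/- Let p = 2^L ⊕ r with degree(r) < L. For any nonnegative integer w, degree((w ⋆ 2^L) mod p) ≤ degree(w) + degree(r), with all operations carry-less. Moreover, if degree(w) + degree(r) < L, then degree((w ⋆ 2^L) mod p) = degree(w) + degree(r) exactly. -/

import Mathlib

/-- Carry-less multiplication: `(a ⋆ b)ᵢ = ⨁ₖ a_{i-k} bₖ`. -/
def clmul : ℕ → ℕ → ℕ
  | 0, _ => 0
  | a + 1, b => (if (a + 1) % 2 = 1 then b else 0) ^^^ 2 * clmul ((a + 1) / 2) b
termination_by a _ => a
decreasing_by simp_wf; omega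

/-!
Write `p = 2^L ⊕ r` and `w ⋆ 2^L = 2^L w = q ⋆ p ⊕ m` with `deg m < L`.
Since `q ⋆ p = 2^L q ⊕ q ⋆ r`, reducing modulo `2^L` (which only sees the low `L` bits) gives
`m = (q ⋆ r) % 2^L`, while dividing by `2^L` gives `w = (q ⋆ p) / 2^L`, so `deg q = deg w`
because degrees add under `⋆`. Hence `deg m ≤ deg (q ⋆ r) = deg w + deg r`, and when this is
`< L` the reduction is the identity and `m = q ⋆ r`.
-/

namespace Nat

theorem two_pow_mul_xor_eq_add {x k : ℕ} (y : ℕ) (hx : x < 2 ^ k) :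
    2 ^ k * y ^^^ x = 2 ^ k * y + x := by
  apply eq_of_testBit_eq
  intro i
  rw [testBit_two_pow_mul_add _ hx, testBit_xor, testBit_two_pow_mul]
  by_cases hi : i < k
  · rw [if_pos hi, decide_eq_false (not_le.2 hi), Bool.false_and, Bool.false_xor]
  · have hxi : x.testBit i = false :=
      testBit_lt_two_pow (hx.trans_le (Nat.pow_le_pow_right two_pos (not_lt.1 hi)))
    rw [if_neg hi, hxi, Bool.xor_false, decide_eq_true (not_lt.1 hi), Bool.true_and]

theorem log2_le_log2 {m n : ℕ} (h : m ≤ n) : log2 m ≤ log2 n := by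
  simpa only [log2_eq_log_two] using log_mono_right h

theorem log2_div_two_pow (n k : ℕ) : log2 (n / 2 ^ k) = log2 n - k := by
  simpa only [log2_eq_log_two] using log_div_base_pow 2 n k

theorem log2_xor_of_lt {x y : ℕ} (hx : x ≠ 0) (hy : y < 2 ^ log2 x) :
    log2 (x ^^^ y) = log2 x := by
  have hyx : y < x := hy.trans_le (log2_self_le hx)
  have hxy : x ^^^ y ≠ 0 := fun h => hyx.ne' (xor_eq_zero_iff.1 h)
  refine (log2_eq_iff hxy).2 ⟨?_, xor_lt_two_pow lt_log2_self (hy.trans (by omega))⟩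
  by_contra! hlt
  have := xor_lt_two_pow hlt hy
  rw [xor_cancel_right] at this
  exact absurd (log2_self_le hx) (not_le.2 this)

theorem two_mul_xor (x y : ℕ) : 2 * (x ^^^ y) = 2 * x ^^^ 2 * y := by
  simpa only [shiftLeft_eq, pow_one, mul_comm] using
    shiftLeft_xor_distrib (i := 1) (a := x) (b := y)

end Nat

open Nat

theorem clmul_eq (a b : ℕ) :
    clmul a b = (if a % 2 = 1 then b else 0) ^^^ 2 * clmul (a / 2) b := by
  cases a with
  | zero => simp [clmul]
  | succ a => rw [clmul]

@[simp] theorem zero_clmul (b : ℕ) : clmul 0 b = 0 := by rw [clmul]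

theorem one_clmul (b : ℕ) : clmul 1 b = b := by
  simp [clmul_eq 1]

theorem clmul_xor (a b c : ℕ) : clmul a (b ^^^ c) = clmul a b ^^^ clmul a c := by
  induction a using Nat.strong_induction_on with
  | _ a ih =>
    rcases Nat.eq_zero_or_pos a with rfl | ha
    · simp
    rw [clmul_eq, clmul_eq a b, clmul_eq a c, ih (a / 2) (by omega), two_mul_xor]
    split <;> ac_rfl

@[simp] theorem clmul_zero (a : ℕ) : clmul a 0 = 0 := by
  simpa using clmul_xor a 0 0

theorem clmul_two_pow (a n : ℕ) : clmul a (2 ^ n) = 2 ^ n * a := by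
  induction a using Nat.strong_induction_on with
  | _ a ih =>
    rcases Nat.eq_zero_or_pos a with rfl | ha
    · simp
    have hbit : (if a % 2 = 1 then 2 ^ n else 0) = 2 ^ n * (a % 2) := by
      rcases mod_two_eq_zero_or_one a with h | h <;> simp [h]
    have hlt : 2 ^ n * (a % 2) < 2 ^ (n + 1) := by
      rw [pow_succ]
      exact Nat.mul_lt_mul_of_pos_left (mod_lt a two_pos) (by positivity)
    rw [clmul_eq, hbit, ih (a / 2) (by omega), ← mul_assoc, ← pow_succ', LawfulXor.xor_comm,
      two_pow_mul_xor_eq_add _ hlt, pow_succ]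
    nth_rw 3 [← div_add_mod a 2]
    ring

theorem log2_clmul {a b : ℕ} (ha : a ≠ 0) (hb : b ≠ 0) :
    log2 (clmul a b) = log2 a + log2 b := by
  -- `clmul a b ≠ 0` is carried along because `log2` does not tell `0` from `1`.
  suffices ∀ a, a ≠ 0 → clmul a b ≠ 0 ∧ log2 (clmul a b) = log2 a + log2 b from
    (this a ha).2
  intro a
  induction a using Nat.strong_induction_on with
  | _ a ih =>
    intro ha
    rcases (show a = 1 ∨ 2 ≤ a by omega) with rfl | ha2
    · rw [one_clmul, show log2 1 = 0 from rfl, zero_add]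
      exact ⟨hb, rfl⟩
    obtain ⟨hc, hlogc⟩ := ih (a / 2) (by omega) (by omega)
    have hloga : log2 a = log2 (a / 2) + 1 := by
      have := log2_div_two_pow a 1
      rw [pow_one] at this
      have : 1 ≤ log2 a := (le_log2 ha).2 ha2
      omega
    have h2c : 2 * clmul (a / 2) b ≠ 0 := by positivity
    have hlt : (if a % 2 = 1 then b else 0) < 2 ^ log2 (2 * clmul (a / 2) b) := by
      rw [log2_two_mul hc, hlogc]
      have hb' : b < 2 ^ (log2 (a / 2) + log2 b + 1) :=
        (lt_log2_self (n := b)).trans_le (Nat.pow_le_pow_right two_pos (by omega))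
      split <;> omega
    rw [clmul_eq, LawfulXor.xor_comm]
    refine ⟨fun h => ?_, by rw [log2_xor_of_lt h2c hlt, log2_two_mul hc, hlogc, hloga]; ring⟩
    have := hlt.trans_le (log2_self_le h2c)
    rw [Nat.xor_eq_zero_iff] at h
    omega

theorem log2_clmul_le (a b : ℕ) : log2 (clmul a b) ≤ log2 a + log2 b := by
  rcases eq_or_ne a 0 with rfl | ha
  · simp
  rcases eq_or_ne b 0 with rfl | hb
  · simp
  exact (log2_clmul ha hb).le

theorem log2_two_pow_xor {L r : ℕ} (hr : r < 2 ^ L) : log2 (2 ^ L ^^^ r) = L := by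
  have h := log2_xor_of_lt (pow_ne_zero L two_ne_zero) (log2_two_pow (n := L) ▸ hr)
  rwa [log2_two_pow] at h

theorem two_pow_xor_ne_zero {L r : ℕ} (hr : r < 2 ^ L) : 2 ^ L ^^^ r ≠ 0 :=
  fun h => hr.ne' (Nat.xor_eq_zero_iff.1 h)

theorem log2_clmul_two_pow_xor_div {L r : ℕ} (q : ℕ) (hr : r < 2 ^ L) :
    log2 (clmul q (2 ^ L ^^^ r) / 2 ^ L) = log2 q := by
  rcases eq_or_ne q 0 with rfl | hq
  · simp
  rw [log2_div_two_pow, log2_clmul hq (two_pow_xor_ne_zero hr), log2_two_pow_xor hr,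
    Nat.add_sub_cancel]

theorem eq_div_two_pow_of_two_pow_mul_eq_xor {w x m L : ℕ} (hm : m < 2 ^ L)
    (h : 2 ^ L * w = x ^^^ m) : w = x / 2 ^ L := by
  have hx : x = 2 ^ L * w + m := by rw [← two_pow_mul_xor_eq_add w hm, h, xor_cancel_right]
  rw [hx, Nat.mul_add_div (by positivity), Nat.div_eq_of_lt hm, add_zero]

theorem eq_clmul_mod_of_two_pow_mul_eq_xor {w q m L r : ℕ} (hm : m < 2 ^ L)
    (h : 2 ^ L * w = clmul q (2 ^ L ^^^ r) ^^^ m) : m = clmul q r % 2 ^ L := by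
  rw [clmul_xor, clmul_two_pow] at h
  have h' := congrArg (· % 2 ^ L) h
  simp only [xor_mod_two_pow, Nat.mul_mod_right, mod_eq_of_lt hm, Nat.zero_xor] at h'
  exact (Nat.xor_eq_zero_iff.1 h'.symm).symm

theorem log2_remainder_of_two_pow_mul_eq {w q m L r : ℕ} (hr0 : r ≠ 0) (hr : r < 2 ^ L)
    (hm : m < 2 ^ L) (h : 2 ^ L * w = clmul q (2 ^ L ^^^ r) ^^^ m) :
    log2 m ≤ log2 w + log2 r ∧
      (w ≠ 0 → log2 w + log2 r < L → log2 m = log2 w + log2 r) := by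
  have hw := eq_div_two_pow_of_two_pow_mul_eq_xor hm h
  have hq : log2 q = log2 w := by rw [hw, log2_clmul_two_pow_xor_div q hr]
  have hmod := eq_clmul_mod_of_two_pow_mul_eq_xor hm h
  constructor
  · calc log2 m ≤ log2 (clmul q r) := hmod ▸ log2_le_log2 (mod_le _ _)
      _ ≤ log2 q + log2 r := log2_clmul_le q r
      _ = log2 w + log2 r := by rw [hq]
  · intro hw0 hlt
    have hq0 : q ≠ 0 := by
      rintro rfl
      exact hw0 (by simpa using hw)
    have hlog : log2 (clmul q r) = log2 w + log2 r := by rw [log2_clmul hq0 hr0, hq]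
    have hsmall : clmul q r < 2 ^ L :=
      lt_log2_self.trans_le (Nat.pow_le_pow_right two_pos (by omega))
    rw [hmod, mod_eq_of_lt hsmall, hlog]

/-- For p = 2^L ⊕ r with degree(r) < L: degree((w ⋆ 2^L) mod p) ≤ degree w + degree r,
with equality when degree w + degree r < L (w nonzero). -/
theorem stmt13 (cldiv clmod : ℕ → ℕ → ℕ)
    (hchar : ∀ a b : ℕ, b ≠ 0 →
      a = clmul (cldiv a b) b ^^^ clmod a b ∧ clmod a b < 2 ^ Nat.log2 b)
    (L : ℕ) (r : ℕ) (hr : r ≠ 0) (hrL : Nat.log2 r < L) :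
    (∀ w : ℕ, Nat.log2 (clmod (clmul w (2 ^ L)) (2 ^ L ^^^ r)) ≤ Nat.log2 w + Nat.log2 r) ∧
    (∀ w : ℕ, w ≠ 0 → Nat.log2 w + Nat.log2 r < L →
      Nat.log2 (clmod (clmul w (2 ^ L)) (2 ^ L ^^^ r)) = Nat.log2 w + Nat.log2 r) := by
  have hr2 : r < 2 ^ L := (log2_lt hr).1 hrL
  have key (w : ℕ) := by
    obtain ⟨hdiv, hm⟩ := hchar (clmul w (2 ^ L)) _ (two_pow_xor_ne_zero hr2)
    rw [log2_two_pow_xor hr2] at hm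
    exact log2_remainder_of_two_pow_mul_eq hr hr2 hm ((clmul_two_pow w L).symm.trans hdiv)
  exact ⟨fun w => (key w).1, fun w => (key w).2⟩
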